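/- There exists C > 0 such that for all η = (η₁,η₂,η₃) ∈ ℝ³ with η ≠ 0 and 3η₁² ≠ η₂²+η₃², and for each index pair (j,k) ∈ {(1,1),(1,2),(1,3),(2,1),(2,2),(3,1),(3,2)}: |B_{j,k}(η)| ≤ C (η₁²+η₂²+η₃²)(3η₁²−η₂²−η₃²)^{−2}, and |∂_{η_j}B_{j,k}(η)| ≤ C [ (η₁²+η₂²+η₃²)^{1/2}(3η₁²−η₂²−η₃²)^{−2} + (η₁²+η₂²+η₃²)^{3/2} |3η₁²−η₂²−η₃²|^{−3} ]. -/

import Mathlib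

noncomputable section

/-- p(η) = (η₁²+η₂²+η₃²)(3η₁²−η₂²−η₃²)². -/
def pZK (η₁ η₂ η₃ : ℝ) : ℝ :=
  (η₁ ^ 2 + η₂ ^ 2 + η₃ ^ 2) * (3 * η₁ ^ 2 - η₂ ^ 2 - η₃ ^ 2) ^ 2

def A0ZK (η₁ η₂ η₃ : ℝ) : ℝ :=
  (9 * η₁ ^ 4 + 30 * η₁ ^ 2 * (η₂ ^ 2 + η₃ ^ 2) + 5 * (η₂ ^ 2 + η₃ ^ 2) ^ 2)
    / (3 * pZK η₁ η₂ η₃)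

def A1ZK (η₁ η₂ η₃ : ℝ) : ℝ :=
  -(η₁ * (9 * η₁ ^ 4 + 18 * η₁ ^ 2 * (η₂ ^ 2 + η₃ ^ 2) + (η₂ ^ 2 + η₃ ^ 2) ^ 2))
    / (3 * pZK η₁ η₂ η₃)

def A2ZK (η₁ η₂ η₃ : ℝ) : ℝ :=
  -(4 * η₂ * (η₂ ^ 2 + η₃ ^ 2) * (3 * η₁ ^ 2 + η₂ ^ 2 + η₃ ^ 2)) / (3 * pZK η₁ η₂ η₃)

def A3ZK (η₁ η₂ η₃ : ℝ) : ℝ :=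
  -(4 * η₃ * (η₂ ^ 2 + η₃ ^ 2) * (3 * η₁ ^ 2 + η₂ ^ 2 + η₃ ^ 2)) / (3 * pZK η₁ η₂ η₃)

def B01ZK (η₁ η₂ η₃ : ℝ) : ℝ := -(4 * η₁ * (η₂ ^ 2 + η₃ ^ 2)) / pZK η₁ η₂ η₃

def B02ZK (η₁ η₂ η₃ : ℝ) : ℝ :=
  -(2 * η₂ * (3 * η₁ ^ 2 + η₂ ^ 2 + η₃ ^ 2)) / (3 * pZK η₁ η₂ η₃)

def B03ZK (η₁ η₂ η₃ : ℝ) : ℝ :=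
  -(2 * η₃ * (3 * η₁ ^ 2 + η₂ ^ 2 + η₃ ^ 2)) / (3 * pZK η₁ η₂ η₃)

def B11ZK (η₁ η₂ η₃ : ℝ) : ℝ := 4 * η₁ ^ 2 * (η₂ ^ 2 + η₃ ^ 2) / pZK η₁ η₂ η₃

def B12ZK (η₁ η₂ η₃ : ℝ) : ℝ :=
  2 * η₁ * η₂ * (3 * η₁ ^ 2 + η₂ ^ 2 + η₃ ^ 2) / (3 * pZK η₁ η₂ η₃)

def B13ZK (η₁ η₂ η₃ : ℝ) : ℝ :=
  2 * η₁ * η₃ * (3 * η₁ ^ 2 + η₂ ^ 2 + η₃ ^ 2) / (3 * pZK η₁ η₂ η₃)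

def B21ZK (η₁ η₂ η₃ : ℝ) : ℝ := 4 * η₁ * η₂ * (η₂ ^ 2 + η₃ ^ 2) / pZK η₁ η₂ η₃

def B31ZK (η₁ η₂ η₃ : ℝ) : ℝ := 4 * η₁ * η₃ * (η₂ ^ 2 + η₃ ^ 2) / pZK η₁ η₂ η₃

def B22ZK (η₁ η₂ η₃ : ℝ) : ℝ :=
  2 * (η₂ ^ 2 + η₃ ^ 2) * (3 * η₁ ^ 2 + η₂ ^ 2 + η₃ ^ 2) / (3 * pZK η₁ η₂ η₃)

def B32ZK (η₁ η₂ η₃ : ℝ) : ℝ :=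
  2 * (η₂ ^ 2 + η₃ ^ 2) * (3 * η₁ ^ 2 + η₂ ^ 2 + η₃ ^ 2) / (3 * pZK η₁ η₂ η₃)

def C21ZK (η₁ η₂ η₃ : ℝ) : ℝ :=
  -(2 * η₃ * (3 * η₁ ^ 2 + η₂ ^ 2 + η₃ ^ 2)) / (3 * pZK η₁ η₂ η₃)

def C31ZK (η₁ η₂ η₃ : ℝ) : ℝ :=
  -(2 * η₂ * (3 * η₁ ^ 2 + η₂ ^ 2 + η₃ ^ 2)) / (3 * pZK η₁ η₂ η₃)

def C22ZK (η₁ η₂ η₃ : ℝ) : ℝ :=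
  2 * η₂ * (3 * η₁ ^ 2 + η₂ ^ 2 + η₃ ^ 2) / (3 * pZK η₁ η₂ η₃)

def C32ZK (η₁ η₂ η₃ : ℝ) : ℝ :=
  2 * η₃ * (3 * η₁ ^ 2 + η₂ ^ 2 + η₃ ^ 2) / (3 * pZK η₁ η₂ η₃)

/-! Write `s = |η|²` and `d = 3η₁² − η₂² − η₃²`. Every `B_{j,k}` is a quotient `N / (s d²)` whose
numerator `N` is a homogeneous quartic, so `|N| ≲ |η|⁴` and `|∂N| ≲ |η|³`; this gives the bound on
`B_{j,k}` at once. For the derivative, logarithmic differentiation of the denominator gives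
`∂(N / (s d²)) = ∂N / (s d²) − N / (s d²) · (∂s / s + 2 ∂d / d)`, and with `|∂s|, |∂d| ≲ |η|` the two
terms are `≲ |η| d⁻²` and `≲ |η|³ |d|⁻³`. Swapping `η₂` and `η₃` turns `B_{1,2}, B_{2,1}, B_{2,2}` into
`B_{1,3}, B_{3,1}, B_{3,2}` and leaves `s` and `d` unchanged. -/

theorem sq_add_sq_add_sq_pos {a b c : ℝ} (h : ¬(a = 0 ∧ b = 0 ∧ c = 0)) :
    0 < a ^ 2 + b ^ 2 + c ^ 2 := by
  contrapose! h
  have ha := sq_nonneg a; have hb := sq_nonneg b; have hc := sq_nonneg c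
  exact ⟨pow_eq_zero_iff two_ne_zero |>.1 (by linarith),
    pow_eq_zero_iff two_ne_zero |>.1 (by linarith),
    pow_eq_zero_iff two_ne_zero |>.1 (by linarith)⟩

theorem abs_le_sqrt_sum_sq (a b c : ℝ) :
    |a| ≤ √(a ^ 2 + b ^ 2 + c ^ 2) ∧ |b| ≤ √(a ^ 2 + b ^ 2 + c ^ 2) ∧
      |c| ≤ √(a ^ 2 + b ^ 2 + c ^ 2) :=
  ⟨Real.abs_le_sqrt (by linarith [sq_nonneg b, sq_nonneg c]),
    Real.abs_le_sqrt (by linarith [sq_nonneg a, sq_nonneg c]),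
    Real.abs_le_sqrt (by linarith [sq_nonneg a, sq_nonneg b])⟩

theorem abs_div_mul_sq_le {n s d K : ℝ} (hs : 0 ≤ s) (hn : |n| ≤ K * s ^ 2) :
    |n / (s * d ^ 2)| ≤ K * s * (d ^ 2)⁻¹ := by
  rcases hs.eq_or_lt with rfl | hs
  · simp
  rcases eq_or_ne d 0 with rfl | hd
  · simp
  have hP : 0 < s * d ^ 2 := mul_pos hs (sq_pos_of_ne_zero hd)
  rw [abs_div, abs_of_pos hP, div_le_iff₀ hP]
  calc |n| ≤ K * s ^ 2 := hn
    _ = K * s * (d ^ 2)⁻¹ * (s * d ^ 2) := by field_simp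

section
variable {N s d : ℝ → ℝ} {N' s' d' x r K : ℝ}

theorem abs_deriv_div_mul_sq_le (hN : HasDerivAt N N' x) (hs : HasDerivAt s s' x)
    (hd : HasDerivAt d d' x) (hr : 0 < r) (hsx : s x = r ^ 2) (hdx : d x ≠ 0)
    (hNx : |N x| ≤ K * r ^ 4) (hN' : |N'| ≤ K * r ^ 3) (hs' : |s'| ≤ K * r)
    (hd' : |d'| ≤ K * r) :
    |deriv (fun t => N t / (s t * d t ^ 2)) x|
      ≤ 2 * K * (1 + K) * (r * (d x ^ 2)⁻¹ + r ^ 3 * (|d x| ^ 3)⁻¹) := by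
  have hK : 0 ≤ K := nonneg_of_mul_nonneg_left ((abs_nonneg _).trans hN') (by positivity)
  have hD : 0 < |d x| := abs_pos.mpr hdx
  have hsx0 : s x ≠ 0 := by rw [hsx]; positivity
  have hquot : HasDerivAt (fun t => N t / (s t * d t ^ 2))
      ((N' * (s x * d x ^ 2) - N x * (s' * d x ^ 2 + s x * (2 * d x ^ (2 - 1) * d')))
        / (s x * d x ^ 2) ^ 2) x :=
    hN.div (hs.mul (hd.pow 2)) (mul_ne_zero hsx0 (pow_ne_zero 2 hdx))
  have hderiv : deriv (fun t => N t / (s t * d t ^ 2)) x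
      = N' / (s x * d x ^ 2) - N x / (s x * d x ^ 2) * (s' / s x + 2 * d' / d x) := by
    rw [hquot.deriv]
    field_simp
    ring
  rw [hderiv, ← sq_abs (d x), hsx]
  set D := |d x|
  have hdx' : |d x| = D := rfl
  calc _ ≤ |N' / (r ^ 2 * D ^ 2)|
          + |N x / (r ^ 2 * D ^ 2)| * (|s' / r ^ 2| + |2 * d' / d x|) := by
        refine (abs_sub _ _).trans (add_le_add le_rfl ?_)
        rw [abs_mul]
        gcongr
        exact abs_add_le _ _
    _ ≤ K * r ^ 3 / (r ^ 2 * D ^ 2)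
          + K * r ^ 4 / (r ^ 2 * D ^ 2) * (K * r / r ^ 2 + 2 * (K * r) / D) := by
        simp only [abs_div, abs_mul, hdx', abs_two,
          abs_of_pos (show 0 < r ^ 2 * D ^ 2 by positivity),
          abs_of_pos (show 0 < r ^ 2 by positivity)]
        gcongr
    _ = K * (1 + K) * (r * (D ^ 2)⁻¹) + 2 * K ^ 2 * (r ^ 3 * (D ^ 3)⁻¹) := by
        field_simp
        ring
    _ ≤ _ := by
        have : 0 ≤ r * (D ^ 2)⁻¹ := by positivity
        have : 0 ≤ r ^ 3 * (D ^ 3)⁻¹ := by positivity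
        nlinarith
end

def BjkEstimate (C η₁ η₂ η₃ b b' : ℝ) : Prop :=
  |b| ≤ C * (η₁ ^ 2 + η₂ ^ 2 + η₃ ^ 2) * ((3 * η₁ ^ 2 - η₂ ^ 2 - η₃ ^ 2) ^ 2)⁻¹ ∧
    |b'| ≤ C * ((η₁ ^ 2 + η₂ ^ 2 + η₃ ^ 2) ^ ((1 : ℝ) / 2)
        * ((3 * η₁ ^ 2 - η₂ ^ 2 - η₃ ^ 2) ^ 2)⁻¹
      + (η₁ ^ 2 + η₂ ^ 2 + η₃ ^ 2) ^ ((3 : ℝ) / 2) * (|3 * η₁ ^ 2 - η₂ ^ 2 - η₃ ^ 2| ^ 3)⁻¹)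

theorem bjkEstimate_of_hasDerivAt {B N s d : ℝ → ℝ} {N' s' d' x η₁ η₂ η₃ K : ℝ}
    (hB : ∀ t, B t = N t / (s t * d t ^ 2))
    (hsx : s x = η₁ ^ 2 + η₂ ^ 2 + η₃ ^ 2) (hdx : d x = 3 * η₁ ^ 2 - η₂ ^ 2 - η₃ ^ 2)
    (hs0 : 0 < s x) (hd0 : d x ≠ 0)
    (hN : HasDerivAt N N' x) (hs : HasDerivAt s s' x) (hd : HasDerivAt d d' x)
    (hNx : |N x| ≤ K * √(s x) ^ 4) (hN' : |N'| ≤ K * √(s x) ^ 3)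
    (hs' : |s'| ≤ K * √(s x)) (hd' : |d'| ≤ K * √(s x)) :
    BjkEstimate (2 * K * (1 + K)) η₁ η₂ η₃ (B x) (deriv B x) := by
  have hK : 0 ≤ K := nonneg_of_mul_nonneg_left ((abs_nonneg _).trans hs') (by positivity)
  have hr : √(s x) ^ 2 = s x := Real.sq_sqrt hs0.le
  have hB' : B = fun t => N t / (s t * d t ^ 2) := funext hB
  rw [BjkEstimate, ← hsx, ← hdx, hB', ← Real.sqrt_eq_rpow,
    show (3 : ℝ) / 2 = (1 / 2 : ℝ) * (3 : ℕ) by norm_num, Real.rpow_mul_natCast hs0.le,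
    ← Real.sqrt_eq_rpow]
  constructor
  · refine (abs_div_mul_sq_le hs0.le
      (hNx.trans_eq (by rw [show √(s x) ^ 4 = (√(s x) ^ 2) ^ 2 by ring, hr]))).trans ?_
    gcongr
    nlinarith
  · exact abs_deriv_div_mul_sq_le hN hs hd (Real.sqrt_pos.2 hs0) hr.symm hd0 hNx hN' hs' hd'

section
variable {B N : ℝ → ℝ} {N' η₁ η₂ η₃ K : ℝ}

theorem bjkEstimate_of_hasDerivAt_fst (hK : 6 ≤ K) (hs : 0 < η₁ ^ 2 + η₂ ^ 2 + η₃ ^ 2)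
    (hd : 3 * η₁ ^ 2 ≠ η₂ ^ 2 + η₃ ^ 2) (hB : ∀ t, B t = N t / pZK t η₂ η₃)
    (hN : HasDerivAt N N' η₁)
    (hN_le : ∀ r, |η₁| ≤ r → |η₂| ≤ r → |η₃| ≤ r → |N η₁| ≤ K * r ^ 4 ∧ |N'| ≤ K * r ^ 3) :
    BjkEstimate (2 * K * (1 + K)) η₁ η₂ η₃ (B η₁) (deriv B η₁) := by
  obtain ⟨h₁, h₂, h₃⟩ := abs_le_sqrt_sum_sq η₁ η₂ η₃
  obtain ⟨hNx, hN'⟩ := hN_le _ h₁ h₂ h₃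
  have hr := Real.sqrt_nonneg (η₁ ^ 2 + η₂ ^ 2 + η₃ ^ 2)
  refine bjkEstimate_of_hasDerivAt (s := fun t => t ^ 2 + η₂ ^ 2 + η₃ ^ 2)
    (d := fun t => 3 * t ^ 2 - η₂ ^ 2 - η₃ ^ 2) (s' := 2 * η₁) (d' := 6 * η₁) hB rfl rfl hs
    (by rw [sub_sub]; exact sub_ne_zero.2 hd) hN ?_ ?_ hNx hN' ?_ ?_
  · exact (((hasDerivAt_pow 2 η₁).add_const _).add_const _).congr_deriv (by ring)
  · exact ((((hasDerivAt_pow 2 η₁).const_mul 3).sub_const _).sub_const _).congr_deriv (by ring)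
  · rw [abs_mul, abs_two]; nlinarith
  · rw [abs_mul, abs_of_pos (by norm_num : (0 : ℝ) < 6)]; nlinarith

theorem bjkEstimate_of_hasDerivAt_snd (hK : 6 ≤ K) (hs : 0 < η₁ ^ 2 + η₂ ^ 2 + η₃ ^ 2)
    (hd : 3 * η₁ ^ 2 ≠ η₂ ^ 2 + η₃ ^ 2) (hB : ∀ t, B t = N t / pZK η₁ t η₃)
    (hN : HasDerivAt N N' η₂)
    (hN_le : ∀ r, |η₁| ≤ r → |η₂| ≤ r → |η₃| ≤ r → |N η₂| ≤ K * r ^ 4 ∧ |N'| ≤ K * r ^ 3) :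
    BjkEstimate (2 * K * (1 + K)) η₁ η₂ η₃ (B η₂) (deriv B η₂) := by
  obtain ⟨h₁, h₂, h₃⟩ := abs_le_sqrt_sum_sq η₁ η₂ η₃
  obtain ⟨hNx, hN'⟩ := hN_le _ h₁ h₂ h₃
  have hr := Real.sqrt_nonneg (η₁ ^ 2 + η₂ ^ 2 + η₃ ^ 2)
  refine bjkEstimate_of_hasDerivAt (s := fun t => η₁ ^ 2 + t ^ 2 + η₃ ^ 2)
    (d := fun t => 3 * η₁ ^ 2 - t ^ 2 - η₃ ^ 2) (s' := 2 * η₂) (d' := -(2 * η₂)) hB rfl rfl hs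
    (by rw [sub_sub]; exact sub_ne_zero.2 hd) hN ?_ ?_ hNx hN' ?_ ?_
  · exact (((hasDerivAt_pow 2 η₂).const_add _).add_const _).congr_deriv (by ring)
  · exact (((hasDerivAt_pow 2 η₂).const_sub _).sub_const _).congr_deriv (by ring)
  · rw [abs_mul, abs_two]; nlinarith
  · rw [abs_neg, abs_mul, abs_two]; nlinarith
end

theorem bjkEstimate_swap {C η₁ η₂ η₃ b b' : ℝ} :
    BjkEstimate C η₁ η₃ η₂ b b' ↔ BjkEstimate C η₁ η₂ η₃ b b' := by
  rw [BjkEstimate, BjkEstimate,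
    show η₁ ^ 2 + η₃ ^ 2 + η₂ ^ 2 = η₁ ^ 2 + η₂ ^ 2 + η₃ ^ 2 by ring,
    show 3 * η₁ ^ 2 - η₃ ^ 2 - η₂ ^ 2 = 3 * η₁ ^ 2 - η₂ ^ 2 - η₃ ^ 2 by ring]

section
variable {η₁ η₂ η₃ : ℝ}

theorem bjkEstimate_B11ZK (hs : 0 < η₁ ^ 2 + η₂ ^ 2 + η₃ ^ 2)
    (hd : 3 * η₁ ^ 2 ≠ η₂ ^ 2 + η₃ ^ 2) :
    BjkEstimate (2 * 16 * (1 + 16)) η₁ η₂ η₃ (B11ZK η₁ η₂ η₃)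
      (deriv (fun t => B11ZK t η₂ η₃) η₁) := by
  refine bjkEstimate_of_hasDerivAt_fst (N := fun t => 4 * t ^ 2 * (η₂ ^ 2 + η₃ ^ 2))
    (N' := 8 * η₁ * (η₂ ^ 2 + η₃ ^ 2)) (by norm_num) hs hd (fun t => rfl)
    ((((hasDerivAt_pow 2 η₁).const_mul 4).mul_const _).congr_deriv (by ring))
    fun r h₁ h₂ h₃ => ?_
  have hr : 0 ≤ r := (abs_nonneg _).trans h₁
  simp only [abs_mul, abs_pow, Nat.abs_ofNat,
    abs_of_nonneg (by positivity : 0 ≤ η₂ ^ 2 + η₃ ^ 2)]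
  simp only [← sq_abs η₂, ← sq_abs η₃]
  constructor
  · calc _ ≤ 4 * r ^ 2 * (r ^ 2 + r ^ 2) := by gcongr
      _ ≤ 16 * r ^ 4 := by nlinarith [pow_nonneg hr 4]
  · calc _ ≤ 8 * r * (r ^ 2 + r ^ 2) := by gcongr
      _ ≤ 16 * r ^ 3 := by nlinarith [pow_nonneg hr 3]

theorem bjkEstimate_B12ZK (hs : 0 < η₁ ^ 2 + η₂ ^ 2 + η₃ ^ 2)
    (hd : 3 * η₁ ^ 2 ≠ η₂ ^ 2 + η₃ ^ 2) :
    BjkEstimate (2 * 16 * (1 + 16)) η₁ η₂ η₃ (B12ZK η₁ η₂ η₃)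
      (deriv (fun t => B12ZK t η₂ η₃) η₁) := by
  refine bjkEstimate_of_hasDerivAt_fst
    (N := fun t => 2 * t * η₂ * (3 * t ^ 2 + η₂ ^ 2 + η₃ ^ 2) / 3)
    (N' := 2 * η₂ * (9 * η₁ ^ 2 + η₂ ^ 2 + η₃ ^ 2) / 3) (by norm_num) hs hd
    (fun t => (div_div _ _ _).symm)
    (((((hasDerivAt_id' η₁).const_mul 2).mul_const η₂).mul
      ((((hasDerivAt_pow 2 η₁).const_mul 3).add_const _).add_const _)).div_const 3
      |>.congr_deriv (by ring))
    fun r h₁ h₂ h₃ => ?_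
  have hr : 0 ≤ r := (abs_nonneg _).trans h₁
  simp only [abs_mul, abs_div, Nat.abs_ofNat,
    abs_of_nonneg (by positivity : 0 ≤ 3 * η₁ ^ 2 + η₂ ^ 2 + η₃ ^ 2),
    abs_of_nonneg (by positivity : 0 ≤ 9 * η₁ ^ 2 + η₂ ^ 2 + η₃ ^ 2)]
  simp only [← sq_abs η₁, ← sq_abs η₂, ← sq_abs η₃]
  constructor
  · calc _ ≤ 2 * r * r * (3 * r ^ 2 + r ^ 2 + r ^ 2) / 3 := by gcongr
      _ ≤ 16 * r ^ 4 := by nlinarith [pow_nonneg hr 4]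
  · calc _ ≤ 2 * r * (9 * r ^ 2 + r ^ 2 + r ^ 2) / 3 := by gcongr
      _ ≤ 16 * r ^ 3 := by nlinarith [pow_nonneg hr 3]

theorem bjkEstimate_B21ZK (hs : 0 < η₁ ^ 2 + η₂ ^ 2 + η₃ ^ 2)
    (hd : 3 * η₁ ^ 2 ≠ η₂ ^ 2 + η₃ ^ 2) :
    BjkEstimate (2 * 16 * (1 + 16)) η₁ η₂ η₃ (B21ZK η₁ η₂ η₃)
      (deriv (fun t => B21ZK η₁ t η₃) η₂) := by
  refine bjkEstimate_of_hasDerivAt_snd (N := fun t => 4 * η₁ * t * (t ^ 2 + η₃ ^ 2))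
    (N' := 4 * η₁ * (3 * η₂ ^ 2 + η₃ ^ 2)) (by norm_num) hs hd (fun t => rfl)
    ((((hasDerivAt_id' η₂).const_mul (4 * η₁)).mul ((hasDerivAt_pow 2 η₂).add_const _))
      |>.congr_deriv (by ring))
    fun r h₁ h₂ h₃ => ?_
  have hr : 0 ≤ r := (abs_nonneg _).trans h₁
  simp only [abs_mul, Nat.abs_ofNat,
    abs_of_nonneg (by positivity : 0 ≤ η₂ ^ 2 + η₃ ^ 2),
    abs_of_nonneg (by positivity : 0 ≤ 3 * η₂ ^ 2 + η₃ ^ 2)]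
  simp only [← sq_abs η₂, ← sq_abs η₃]
  constructor
  · calc _ ≤ 4 * r * r * (r ^ 2 + r ^ 2) := by gcongr
      _ ≤ 16 * r ^ 4 := by nlinarith [pow_nonneg hr 4]
  · calc _ ≤ 4 * r * (3 * r ^ 2 + r ^ 2) := by gcongr
      _ ≤ 16 * r ^ 3 := by nlinarith [pow_nonneg hr 3]

theorem bjkEstimate_B22ZK (hs : 0 < η₁ ^ 2 + η₂ ^ 2 + η₃ ^ 2)
    (hd : 3 * η₁ ^ 2 ≠ η₂ ^ 2 + η₃ ^ 2) :
    BjkEstimate (2 * 16 * (1 + 16)) η₁ η₂ η₃ (B22ZK η₁ η₂ η₃)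
      (deriv (fun t => B22ZK η₁ t η₃) η₂) := by
  refine bjkEstimate_of_hasDerivAt_snd
    (N := fun t => 2 * (t ^ 2 + η₃ ^ 2) * (3 * η₁ ^ 2 + t ^ 2 + η₃ ^ 2) / 3)
    (N' := 4 * η₂ * (3 * η₁ ^ 2 + 2 * η₂ ^ 2 + 2 * η₃ ^ 2) / 3) (by norm_num) hs hd
    (fun t => (div_div _ _ _).symm)
    (((((hasDerivAt_pow 2 η₂).add_const _).const_mul 2).mul
      (((hasDerivAt_pow 2 η₂).const_add _).add_const _)).div_const 3
      |>.congr_deriv (by ring))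
    fun r h₁ h₂ h₃ => ?_
  have hr : 0 ≤ r := (abs_nonneg _).trans h₁
  simp only [abs_mul, abs_div, Nat.abs_ofNat,
    abs_of_nonneg (by positivity : 0 ≤ η₂ ^ 2 + η₃ ^ 2),
    abs_of_nonneg (by positivity : 0 ≤ 3 * η₁ ^ 2 + η₂ ^ 2 + η₃ ^ 2),
    abs_of_nonneg (by positivity : 0 ≤ 3 * η₁ ^ 2 + 2 * η₂ ^ 2 + 2 * η₃ ^ 2)]
  simp only [← sq_abs η₁, ← sq_abs η₂, ← sq_abs η₃]
  constructor
  · calc _ ≤ 2 * (r ^ 2 + r ^ 2) * (3 * r ^ 2 + r ^ 2 + r ^ 2) / 3 := by gcongr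
      _ ≤ 16 * r ^ 4 := by nlinarith [pow_nonneg hr 4]
  · calc _ ≤ 4 * r * (3 * r ^ 2 + 2 * r ^ 2 + 2 * r ^ 2) / 3 := by gcongr
      _ ≤ 16 * r ^ 3 := by nlinarith [pow_nonneg hr 3]
theorem bjkEstimate_B13ZK (hs : 0 < η₁ ^ 2 + η₂ ^ 2 + η₃ ^ 2)
    (hd : 3 * η₁ ^ 2 ≠ η₂ ^ 2 + η₃ ^ 2) :
    BjkEstimate (2 * 16 * (1 + 16)) η₁ η₂ η₃ (B13ZK η₁ η₂ η₃)
      (deriv (fun t => B13ZK t η₂ η₃) η₁) := by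
  have hB : ∀ a b c, B13ZK a b c = B12ZK a c b := by
    intro a b c; simp only [B13ZK, B12ZK, pZK]; ring
  simp only [hB]
  exact bjkEstimate_swap.1 (bjkEstimate_B12ZK (by linarith) (by rwa [add_comm]))

theorem bjkEstimate_B31ZK (hs : 0 < η₁ ^ 2 + η₂ ^ 2 + η₃ ^ 2)
    (hd : 3 * η₁ ^ 2 ≠ η₂ ^ 2 + η₃ ^ 2) :
    BjkEstimate (2 * 16 * (1 + 16)) η₁ η₂ η₃ (B31ZK η₁ η₂ η₃)
      (deriv (fun t => B31ZK η₁ η₂ t) η₃) := by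
  have hB : ∀ a b c, B31ZK a b c = B21ZK a c b := by
    intro a b c; simp only [B31ZK, B21ZK, pZK]; ring
  simp only [hB]
  exact bjkEstimate_swap.1 (bjkEstimate_B21ZK (by linarith) (by rwa [add_comm]))

theorem bjkEstimate_B32ZK (hs : 0 < η₁ ^ 2 + η₂ ^ 2 + η₃ ^ 2)
    (hd : 3 * η₁ ^ 2 ≠ η₂ ^ 2 + η₃ ^ 2) :
    BjkEstimate (2 * 16 * (1 + 16)) η₁ η₂ η₃ (B32ZK η₁ η₂ η₃)
      (deriv (fun t => B32ZK η₁ η₂ t) η₃) := by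
  have hB : ∀ a b c, B32ZK a b c = B22ZK a c b := by
    intro a b c; simp only [B32ZK, B22ZK, pZK]; ring
  simp only [hB]
  exact bjkEstimate_swap.1 (bjkEstimate_B22ZK (by linarith) (by rwa [add_comm]))
end

/-- Bounds on B_{j,k} and on ∂_{η_j}B_{j,k} for
(j,k) ∈ {(1,1),(1,2),(1,3),(2,1),(2,2),(3,1),(3,2)}. -/
theorem Bjk_bounds :
    ∃ C > 0, ∀ η₁ η₂ η₃ : ℝ, ¬(η₁ = 0 ∧ η₂ = 0 ∧ η₃ = 0) →
      3 * η₁ ^ 2 ≠ η₂ ^ 2 + η₃ ^ 2 →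
      (|B11ZK η₁ η₂ η₃| ≤ C * (η₁ ^ 2 + η₂ ^ 2 + η₃ ^ 2)
          * ((3 * η₁ ^ 2 - η₂ ^ 2 - η₃ ^ 2) ^ 2)⁻¹) ∧
      (|B12ZK η₁ η₂ η₃| ≤ C * (η₁ ^ 2 + η₂ ^ 2 + η₃ ^ 2)
          * ((3 * η₁ ^ 2 - η₂ ^ 2 - η₃ ^ 2) ^ 2)⁻¹) ∧
      (|B13ZK η₁ η₂ η₃| ≤ C * (η₁ ^ 2 + η₂ ^ 2 + η₃ ^ 2)
          * ((3 * η₁ ^ 2 - η₂ ^ 2 - η₃ ^ 2) ^ 2)⁻¹) ∧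
      (|B21ZK η₁ η₂ η₃| ≤ C * (η₁ ^ 2 + η₂ ^ 2 + η₃ ^ 2)
          * ((3 * η₁ ^ 2 - η₂ ^ 2 - η₃ ^ 2) ^ 2)⁻¹) ∧
      (|B22ZK η₁ η₂ η₃| ≤ C * (η₁ ^ 2 + η₂ ^ 2 + η₃ ^ 2)
          * ((3 * η₁ ^ 2 - η₂ ^ 2 - η₃ ^ 2) ^ 2)⁻¹) ∧
      (|B31ZK η₁ η₂ η₃| ≤ C * (η₁ ^ 2 + η₂ ^ 2 + η₃ ^ 2)
          * ((3 * η₁ ^ 2 - η₂ ^ 2 - η₃ ^ 2) ^ 2)⁻¹) ∧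
      (|B32ZK η₁ η₂ η₃| ≤ C * (η₁ ^ 2 + η₂ ^ 2 + η₃ ^ 2)
          * ((3 * η₁ ^ 2 - η₂ ^ 2 - η₃ ^ 2) ^ 2)⁻¹) ∧
      (|deriv (fun s => B11ZK s η₂ η₃) η₁|
          ≤ C * ((η₁ ^ 2 + η₂ ^ 2 + η₃ ^ 2) ^ ((1 : ℝ) / 2)
                  * ((3 * η₁ ^ 2 - η₂ ^ 2 - η₃ ^ 2) ^ 2)⁻¹
              + (η₁ ^ 2 + η₂ ^ 2 + η₃ ^ 2) ^ ((3 : ℝ) / 2)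
                  * (|3 * η₁ ^ 2 - η₂ ^ 2 - η₃ ^ 2| ^ 3)⁻¹)) ∧
      (|deriv (fun s => B12ZK s η₂ η₃) η₁|
          ≤ C * ((η₁ ^ 2 + η₂ ^ 2 + η₃ ^ 2) ^ ((1 : ℝ) / 2)
                  * ((3 * η₁ ^ 2 - η₂ ^ 2 - η₃ ^ 2) ^ 2)⁻¹
              + (η₁ ^ 2 + η₂ ^ 2 + η₃ ^ 2) ^ ((3 : ℝ) / 2)
                  * (|3 * η₁ ^ 2 - η₂ ^ 2 - η₃ ^ 2| ^ 3)⁻¹)) ∧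
      (|deriv (fun s => B13ZK s η₂ η₃) η₁|
          ≤ C * ((η₁ ^ 2 + η₂ ^ 2 + η₃ ^ 2) ^ ((1 : ℝ) / 2)
                  * ((3 * η₁ ^ 2 - η₂ ^ 2 - η₃ ^ 2) ^ 2)⁻¹
              + (η₁ ^ 2 + η₂ ^ 2 + η₃ ^ 2) ^ ((3 : ℝ) / 2)
                  * (|3 * η₁ ^ 2 - η₂ ^ 2 - η₃ ^ 2| ^ 3)⁻¹)) ∧
      (|deriv (fun s => B21ZK η₁ s η₃) η₂|
          ≤ C * ((η₁ ^ 2 + η₂ ^ 2 + η₃ ^ 2) ^ ((1 : ℝ) / 2)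
                  * ((3 * η₁ ^ 2 - η₂ ^ 2 - η₃ ^ 2) ^ 2)⁻¹
              + (η₁ ^ 2 + η₂ ^ 2 + η₃ ^ 2) ^ ((3 : ℝ) / 2)
                  * (|3 * η₁ ^ 2 - η₂ ^ 2 - η₃ ^ 2| ^ 3)⁻¹)) ∧
      (|deriv (fun s => B22ZK η₁ s η₃) η₂|
          ≤ C * ((η₁ ^ 2 + η₂ ^ 2 + η₃ ^ 2) ^ ((1 : ℝ) / 2)
                  * ((3 * η₁ ^ 2 - η₂ ^ 2 - η₃ ^ 2) ^ 2)⁻¹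
              + (η₁ ^ 2 + η₂ ^ 2 + η₃ ^ 2) ^ ((3 : ℝ) / 2)
                  * (|3 * η₁ ^ 2 - η₂ ^ 2 - η₃ ^ 2| ^ 3)⁻¹)) ∧
      (|deriv (fun s => B31ZK η₁ η₂ s) η₃|
          ≤ C * ((η₁ ^ 2 + η₂ ^ 2 + η₃ ^ 2) ^ ((1 : ℝ) / 2)
                  * ((3 * η₁ ^ 2 - η₂ ^ 2 - η₃ ^ 2) ^ 2)⁻¹
              + (η₁ ^ 2 + η₂ ^ 2 + η₃ ^ 2) ^ ((3 : ℝ) / 2)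
                  * (|3 * η₁ ^ 2 - η₂ ^ 2 - η₃ ^ 2| ^ 3)⁻¹)) ∧
      (|deriv (fun s => B32ZK η₁ η₂ s) η₃|
          ≤ C * ((η₁ ^ 2 + η₂ ^ 2 + η₃ ^ 2) ^ ((1 : ℝ) / 2)
                  * ((3 * η₁ ^ 2 - η₂ ^ 2 - η₃ ^ 2) ^ 2)⁻¹
              + (η₁ ^ 2 + η₂ ^ 2 + η₃ ^ 2) ^ ((3 : ℝ) / 2)
                  * (|3 * η₁ ^ 2 - η₂ ^ 2 - η₃ ^ 2| ^ 3)⁻¹)) := by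
  refine ⟨2 * 16 * (1 + 16), by norm_num, fun η₁ η₂ η₃ hη hd => ?_⟩
  have hs := sq_add_sq_add_sq_pos hη
  obtain ⟨h₁₁, h₁₁'⟩ := bjkEstimate_B11ZK hs hd
  obtain ⟨h₁₂, h₁₂'⟩ := bjkEstimate_B12ZK hs hd
  obtain ⟨h₁₃, h₁₃'⟩ := bjkEstimate_B13ZK hs hd
  obtain ⟨h₂₁, h₂₁'⟩ := bjkEstimate_B21ZK hs hd
  obtain ⟨h₂₂, h₂₂'⟩ := bjkEstimate_B22ZK hs hd
  obtain ⟨h₃₁, h₃₁'⟩ := bjkEstimate_B31ZK hs hd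
  obtain ⟨h₃₂, h₃₂'⟩ := bjkEstimate_B32ZK hs hd
  exact ⟨h₁₁, h₁₂, h₁₃, h₂₁, h₂₂, h₃₁, h₃₂, h₁₁', h₁₂', h₁₃', h₂₁', h₂₂', h₃₁', h₃₂'⟩
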